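/- Let S_{U,0} be the linear span of S_U and ψ₀ in ℂ³ ⊗ ℂ³. Then the set of one-dimensional subspaces of S_{U,0} spanned by product vectors has exactly 6 elements, namely those spanned by: ψ₀ = |0⟩ ⊗ (|0⟩ − |1⟩); (|0⟩ − |1⟩) ⊗ |1⟩; (|0⟩ + |1⟩) ⊗ (|1⟩ − |2⟩); (|0⟩ + |1⟩ − 2|2⟩) ⊗ (|1⟩ + |2⟩); (2|0⟩ − |1⟩ − |2⟩) ⊗ |0⟩; and (|0⟩ + |1⟩ + |2⟩) ⊗ (2|0⟩ − |1⟩ − |2⟩). In particular, every product vector in S_{U,0} is a scalar multiple of one of these six vectors. -/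

import Mathlib

noncomputable section

abbrev H3 : Type := EuclideanSpace ℂ (Fin 3)
abbrev H33 : Type := EuclideanSpace ℂ (Fin 3 × Fin 3)

/-- standard basis vector of ℂ³ -/
def ket3 (i : Fin 3) : H3 := EuclideanSpace.single i 1

/-- elementary tensor of two vectors of ℂ³, viewed in ℂ³ ⊗ ℂ³ ≅ ℂ⁹ -/
def tp (u v : H3) : H33 := WithLp.toLp 2 (fun p : Fin 3 × Fin 3 => u p.1 * v p.2)

/-- a product vector in ℂ³ ⊗ ℂ³ -/
def IsProdVec (ξ : H33) : Prop := ∃ u v : H3, ξ = tp u v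

/-- the set of one-dimensional subspaces of `T` spanned by (nonzero) product vectors -/
def prodLines (T : Submodule ℂ H33) : Set (Submodule ℂ H33) :=
  {L | ∃ ξ : H33, ξ ≠ 0 ∧ ξ ∈ T ∧ IsProdVec ξ ∧ L = Submodule.span ℂ {ξ}}

def ψ₀ : H33 := (Real.sqrt 2 : ℂ)⁻¹ • tp (ket3 0) (ket3 0 - ket3 1)
def ψ₁ : H33 := (Real.sqrt 2 : ℂ)⁻¹ • tp (ket3 2) (ket3 1 - ket3 2)
def ψ₂ : H33 := (Real.sqrt 2 : ℂ)⁻¹ • tp (ket3 0 - ket3 1) (ket3 2)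
def ψ₃ : H33 := (Real.sqrt 2 : ℂ)⁻¹ • tp (ket3 2 - ket3 1) (ket3 0)
def ψ₄ : H33 := (3 : ℂ)⁻¹ • tp (ket3 0 + ket3 1 + ket3 2) (ket3 0 + ket3 1 + ket3 2)

/-- the span of the TILES unextendible product basis -/
def U33 : Submodule ℂ H33 := Submodule.span ℂ {ψ₀, ψ₁, ψ₂, ψ₃, ψ₄}

/-- the orthogonal complement of the span of the TILES UPB -/
def SU : Submodule ℂ H33 := U33ᗮ

/-- the perturbation of `S_U` by `ψ₀` -/
def SU0 : Submodule ℂ H33 := SU ⊔ Submodule.span ℂ {ψ₀}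

/-!
The vectors ψ₁, …, ψ₄ are orthogonal to ψ₀, so `S_{U,0}` is the orthogonal complement of
`span {ψ₁, ψ₂, ψ₃, ψ₄}`. As `ψᵢ = aᵢ ⊗ bᵢ`, a product `u ⊗ v` lies in it iff for every `i`
either `⟪aᵢ, u⟫ = 0` or `⟪bᵢ, v⟫ = 0`. Any three of the `aᵢ`, and any three of the `bᵢ`, span ℂ³,
so a nonzero product satisfies exactly two of these conditions through `u` and the other two
through `v`; each of the six ways of splitting the four conditions cuts out one product line.
-/

open Submodule

theorem Submodule.orthogonal_sup_sup_eq_orthogonal_of_le {𝕜 E : Type*} [RCLike 𝕜]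
    [NormedAddCommGroup E] [InnerProductSpace 𝕜 E] {K L : Submodule 𝕜 E}
    [L.HasOrthogonalProjection] (h : L ≤ Kᗮ) : (L ⊔ K)ᗮ ⊔ L = Kᗮ := by
  rw [← inf_orthogonal, sup_comm]
  exact sup_orthogonal_inf_of_hasOrthogonalProjection h

theorem EuclideanSpace.ext_iff_fin_three {𝕜 : Type*} [RCLike 𝕜] {u w : EuclideanSpace 𝕜 (Fin 3)} :
    u = w ↔ u 0 = w 0 ∧ u 1 = w 1 ∧ u 2 = w 2 := by
  refine ⟨by rintro rfl; simp, fun ⟨h₀, h₁, h₂⟩ => ?_⟩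
  ext i
  fin_cases i <;> assumption

theorem span_singleton_ne_of_apply {𝕜 ι : Type*} [RCLike 𝕜] {ξ η : EuclideanSpace 𝕜 ι} (p : ι)
    (hξ : ξ p = 0) (hη : η p ≠ 0) : span 𝕜 {ξ} ≠ span 𝕜 {η} := by
  intro he
  obtain ⟨c, rfl⟩ := mem_span_singleton.1 (he ▸ mem_span_singleton_self η)
  simp [hξ] at hη

theorem inner_tp (a b u v : H3) : inner ℂ (tp a b) (tp u v) = inner ℂ a u * inner ℂ b v := by
  simp only [PiLp.inner_apply, tp, Fintype.sum_prod_type, Finset.sum_mul_sum, RCLike.inner_apply,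
    map_mul]
  refine Finset.sum_congr rfl fun i _ => Finset.sum_congr rfl fun j _ => ?_
  ring

theorem tp_eq_zero_iff {u v : H3} : tp u v = 0 ↔ u = 0 ∨ v = 0 := by
  refine ⟨fun h => ?_, by rintro (rfl | rfl) <;> ext <;> simp [tp]⟩
  by_contra! hne
  obtain ⟨i, hi⟩ : ∃ i, u i ≠ 0 := by
    by_contra! h; exact hne.1 (by ext i; exact h i)
  obtain ⟨j, hj⟩ : ∃ j, v j ≠ 0 := by
    by_contra! h; exact hne.2 (by ext j; exact h j)
  have := congrArg (fun ξ : H33 => ξ (i, j)) h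
  simp [tp, hi, hj] at this

theorem span_tp_eq_of_eq_smul {u v x y : H3} {a b : ℂ} (hu : u = a • x) (hv : v = b • y)
    (h : tp u v ≠ 0) : span ℂ {tp u v} = span ℂ {tp x y} := by
  have htp : tp u v = (a * b) • tp x y := by
    ext p; simp [tp, hu, hv]; ring
  have hab : a * b ≠ 0 := by rintro hab; simp [htp, hab] at h
  rw [htp, span_singleton_smul_eq hab.isUnit]

theorem tp_mem_orthogonal_span_iff (u v : H3) : tp u v ∈ (span ℂ {ψ₁, ψ₂, ψ₃, ψ₄})ᗮ ↔
    (u 2 = 0 ∨ v 1 = v 2) ∧ (u 0 = u 1 ∨ v 2 = 0) ∧ (u 2 = u 1 ∨ v 0 = 0) ∧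
      (u 0 + u 1 + u 2 = 0 ∨ v 0 + v 1 + v 2 = 0) := by
  simp [span_insert, ← inf_orthogonal, mem_orthogonal_singleton_iff_inner_right, ψ₁, ψ₂, ψ₃, ψ₄,
    inner_smul_left, inner_tp, ket3, EuclideanSpace.inner_single_left, sub_eq_zero]

theorem SU0_eq_orthogonal_span : SU0 = (span ℂ {ψ₁, ψ₂, ψ₃, ψ₄})ᗮ := by
  rw [SU0, SU, U33, span_insert]
  refine orthogonal_sup_sup_eq_orthogonal_of_le ?_
  rw [span_singleton_le_iff_mem, ψ₀]
  refine smul_mem _ _ ((tp_mem_orthogonal_span_iff _ _).2 ?_)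
  simp [ket3]

theorem tp_mem_SU0_iff (u v : H3) : tp u v ∈ SU0 ↔
    (u 2 = 0 ∨ v 1 = v 2) ∧ (u 0 = u 1 ∨ v 2 = 0) ∧ (u 2 = u 1 ∨ v 0 = 0) ∧
      (u 0 + u 1 + u 2 = 0 ∨ v 0 + v 1 + v 2 = 0) := by
  rw [SU0_eq_orthogonal_span, tp_mem_orthogonal_span_iff]

theorem tiles_conditions_cases {a₀ a₁ a₂ b₀ b₁ b₂ : ℂ} (ha : ¬(a₀ = 0 ∧ a₁ = 0 ∧ a₂ = 0))
    (hb : ¬(b₀ = 0 ∧ b₁ = 0 ∧ b₂ = 0)) (h₁ : a₂ = 0 ∨ b₁ = b₂) (h₂ : a₀ = a₁ ∨ b₂ = 0)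
    (h₃ : a₂ = a₁ ∨ b₀ = 0) (h₄ : a₀ + a₁ + a₂ = 0 ∨ b₀ + b₁ + b₂ = 0) :
    (a₁ = 0 ∧ a₂ = 0 ∧ b₁ = -b₀ ∧ b₂ = 0) ∨
    (a₁ = -a₀ ∧ a₂ = 0 ∧ b₀ = 0 ∧ b₂ = 0) ∨
    (a₁ = a₀ ∧ a₂ = 0 ∧ b₀ = 0 ∧ b₂ = -b₁) ∨
    (a₁ = a₀ ∧ a₂ = -2 * a₀ ∧ b₀ = 0 ∧ b₂ = b₁) ∨
    (a₀ = -2 * a₁ ∧ a₂ = a₁ ∧ b₁ = 0 ∧ b₂ = 0) ∨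
    (a₁ = a₀ ∧ a₂ = a₀ ∧ b₀ = -2 * b₁ ∧ b₂ = b₁) := by
  rcases h₁ with h₁ | h₁ <;> rcases h₂ with h₂ | h₂ <;> rcases h₃ with h₃ | h₃ <;>
    rcases h₄ with h₄ | h₄ <;> grind

def sixLines : Set (Submodule ℂ H33) :=
  {span ℂ {tp (ket3 0) (ket3 0 - ket3 1)},
   span ℂ {tp (ket3 0 - ket3 1) (ket3 1)},
   span ℂ {tp (ket3 0 + ket3 1) (ket3 1 - ket3 2)},
   span ℂ {tp (ket3 0 + ket3 1 - (2 : ℂ) • ket3 2) (ket3 1 + ket3 2)},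
   span ℂ {tp ((2 : ℂ) • ket3 0 - ket3 1 - ket3 2) (ket3 0)},
   span ℂ {tp (ket3 0 + ket3 1 + ket3 2) ((2 : ℂ) • ket3 0 - ket3 1 - ket3 2)}}

theorem span_tp_mem_sixLines {u v : H3} (h : tp u v ≠ 0) (hmem : tp u v ∈ SU0) :
    span ℂ {tp u v} ∈ sixLines := by
  obtain ⟨hu, hv⟩ := not_or.1 (tp_eq_zero_iff.not.1 h)
  rw [EuclideanSpace.ext_iff_fin_three] at hu hv
  obtain ⟨h₁, h₂, h₃, h₄⟩ := (tp_mem_SU0_iff u v).1 hmem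
  simp only [sixLines, Set.mem_insert_iff, Set.mem_singleton_iff]
  rcases tiles_conditions_cases hu hv h₁ h₂ h₃ h₄ with
    ⟨hu₁, hu₂, hv₁, hv₂⟩ | ⟨hu₁, hu₂, hv₁, hv₂⟩ | ⟨hu₁, hu₂, hv₁, hv₂⟩ | ⟨hu₁, hu₂, hv₁, hv₂⟩ |
    ⟨hu₁, hu₂, hv₁, hv₂⟩ | ⟨hu₁, hu₂, hv₁, hv₂⟩
  · refine .inl <| span_tp_eq_of_eq_smul (a := u 0) (b := v 0) ?_ ?_ h <;>
      simp [EuclideanSpace.ext_iff_fin_three, ket3, hu₁, hu₂, hv₁, hv₂]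
  · refine .inr <| .inl <| span_tp_eq_of_eq_smul (a := u 0) (b := v 1) ?_ ?_ h <;>
      simp [EuclideanSpace.ext_iff_fin_three, ket3, hu₁, hu₂, hv₁, hv₂]
  · refine .inr <| .inr <| .inl <| span_tp_eq_of_eq_smul (a := u 0) (b := v 1) ?_ ?_ h <;>
      simp [EuclideanSpace.ext_iff_fin_three, ket3, hu₁, hu₂, hv₁, hv₂]
  · refine .inr <| .inr <| .inr <| .inl <| span_tp_eq_of_eq_smul (a := u 0) (b := v 1) ?_ ?_ h <;>
      simp [EuclideanSpace.ext_iff_fin_three, ket3, hu₁, hu₂, hv₁, hv₂, mul_comm]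
  · refine .inr <| .inr <| .inr <| .inr <| .inl <|
      span_tp_eq_of_eq_smul (a := -u 1) (b := v 0) ?_ ?_ h <;>
      simp [EuclideanSpace.ext_iff_fin_three, ket3, hu₁, hu₂, hv₁, hv₂, mul_comm]
  · refine .inr <| .inr <| .inr <| .inr <| .inr <|
      span_tp_eq_of_eq_smul (a := u 0) (b := -v 1) ?_ ?_ h <;>
      simp [EuclideanSpace.ext_iff_fin_three, ket3, hu₁, hu₂, hv₁, hv₂, mul_comm]

theorem prodLines_SU0 : prodLines SU0 = sixLines := by
  refine Set.Subset.antisymm ?_ ?_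
  · rintro L ⟨ξ, hξ, hmem, ⟨u, v, rfl⟩, rfl⟩
    exact span_tp_mem_sixLines hξ hmem
  · rintro L (rfl | rfl | rfl | rfl | rfl | rfl) <;>
      refine ⟨_, ?_, ?_, ⟨_, _, rfl⟩, rfl⟩ <;>
      simp [tp_eq_zero_iff, tp_mem_SU0_iff, EuclideanSpace.ext_iff_fin_three, ket3] <;> norm_num

theorem ncard_sixLines : sixLines.ncard = 6 := by
  rw [sixLines, Set.ncard_insert_of_notMem, Set.ncard_insert_of_notMem, Set.ncard_insert_of_notMem,
    Set.ncard_insert_of_notMem, Set.ncard_insert_of_notMem, Set.ncard_singleton]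
  all_goals simp only [Set.mem_insert_iff, Set.mem_singleton_iff, not_or]
  · exact span_singleton_ne_of_apply (0, 1) (by simp [tp, ket3]) (by simp [tp, ket3])
  · refine ⟨span_singleton_ne_of_apply (0, 0) ?_ ?_, span_singleton_ne_of_apply (0, 0) ?_ ?_⟩ <;>
      simp [tp, ket3]
  · refine ⟨span_singleton_ne_of_apply (2, 1) ?_ ?_, span_singleton_ne_of_apply (0, 0) ?_ ?_,
      span_singleton_ne_of_apply (0, 0) ?_ ?_⟩ <;> simp [tp, ket3]
  · refine ⟨span_singleton_ne_of_apply (0, 2) ?_ ?_, span_singleton_ne_of_apply (0, 2) ?_ ?_,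
      span_singleton_ne_of_apply (0, 0) ?_ ?_, span_singleton_ne_of_apply (0, 0) ?_ ?_⟩ <;>
      simp [tp, ket3]
  · refine ⟨span_singleton_ne_of_apply (1, 1) ?_ ?_, span_singleton_ne_of_apply (0, 2) ?_ ?_,
      span_singleton_ne_of_apply (0, 2) ?_ ?_, span_singleton_ne_of_apply (1, 0) ?_ ?_,
      span_singleton_ne_of_apply (0, 2) ?_ ?_⟩ <;> simp [tp, ket3]

theorem statement1 :
    prodLines SU0 =
      {Submodule.span ℂ {tp (ket3 0) (ket3 0 - ket3 1)},
       Submodule.span ℂ {tp (ket3 0 - ket3 1) (ket3 1)},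
       Submodule.span ℂ {tp (ket3 0 + ket3 1) (ket3 1 - ket3 2)},
       Submodule.span ℂ {tp (ket3 0 + ket3 1 - (2 : ℂ) • ket3 2) (ket3 1 + ket3 2)},
       Submodule.span ℂ {tp ((2 : ℂ) • ket3 0 - ket3 1 - ket3 2) (ket3 0)},
       Submodule.span ℂ {tp (ket3 0 + ket3 1 + ket3 2) ((2 : ℂ) • ket3 0 - ket3 1 - ket3 2)}} ∧
    (prodLines SU0).ncard = 6 := by
  rw [prodLines_SU0]
  exact ⟨rfl, ncard_sixLines⟩
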